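/- arXiv:1312.4475 — 2 statements merged into one kernel-verified Lean document; each statement's English description precedes it below -/
import Mathlib

section
/- Let O be a discrete valuation ring with uniformizer π, G a finite group, and M, N finitely generated OG-lattices. Suppose every element of the stable Hom space Hom(M,N) (morphisms modulo those factoring through a projective OG-module) is annihilated by π^b. Then the reduction map Hom_stable(M, N) → Hom_stable(M/π^b M, N/π^b N) induced by tensoring with O/π^b O is injective. -/
open Pointwise

/-- `f` factors through a projective `A`-module. -/
def FactorsThroughProjective (A : Type) [Ring A] {M N : Type}
    [AddCommGroup M] [Module A M] [AddCommGroup N] [Module A N]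
    (f : M →ₗ[A] N) : Prop :=
  ∃ (P : Type) (_ : AddCommGroup P) (_ : Module A P), Module.Projective A P ∧
    ∃ (g : M →ₗ[A] P) (h : P →ₗ[A] N), h.comp g = f

/-!
Lift a projective factorisation of the reduction of `f` to a map `c : M → N` factoring through
the same projective. Then `f - c` has image in `π^b N`, and since `N` is torsion-free it equals
`π^b • u` for some `u : M → N`, which factors through a projective by hypothesis. Hence
`f = c + π^b • u` factors through the direct sum of the two projectives.
-/

namespace FactorsThroughProjective

variable {A : Type} [Ring A] {M N L : Type} [AddCommGroup M] [Module A M]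
  [AddCommGroup N] [Module A N] [AddCommGroup L] [Module A L]

theorem add {f f' : M →ₗ[A] N} (hf : FactorsThroughProjective A f)
    (hf' : FactorsThroughProjective A f') : FactorsThroughProjective A (f + f') := by
  obtain ⟨P, _, _, hP, g, h, rfl⟩ := hf
  obtain ⟨Q, _, _, hQ, g', h', rfl⟩ := hf'
  refine ⟨P × Q, inferInstance, inferInstance, inferInstance, g.prod g', h.coprod h', ?_⟩
  ext x
  simp

theorem comp_right {f : M →ₗ[A] N} (hf : FactorsThroughProjective A f) (e : L →ₗ[A] M) :
    FactorsThroughProjective A (f ∘ₗ e) := by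
  obtain ⟨P, _, _, hP, g, h, rfl⟩ := hf
  exact ⟨P, _, _, hP, g ∘ₗ e, h, rfl⟩

theorem exists_lift {f : L →ₗ[A] N} (hf : FactorsThroughProjective A f) {p : M →ₗ[A] N}
    (hp : Function.Surjective p) :
    ∃ c : L →ₗ[A] M, FactorsThroughProjective A c ∧ p ∘ₗ c = f := by
  obtain ⟨P, _, _, hP, g, h, rfl⟩ := hf
  obtain ⟨h', hh'⟩ := Module.projective_lifting_property p h hp
  exact ⟨h' ∘ₗ g, ⟨P, _, _, hP, g, h', rfl⟩, by rw [← LinearMap.comp_assoc, hh']⟩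

end FactorsThroughProjective

theorem LinearMap.exists_smul_eq_of_range_le {A R M N : Type} [Ring A] [Monoid R]
    [AddCommGroup M] [Module A M] [AddCommGroup N] [Module A N] [DistribMulAction R N]
    [SMulCommClass A R N] [SMulCommClass R A N] {r : R}
    (hr : Function.Injective (r • · : N → N)) {f : M →ₗ[A] N}
    (hf : LinearMap.range f ≤ r • (⊤ : Submodule A N)) : ∃ u : M →ₗ[A] N, r • u = f := by
  have hdiv (x : M) : ∃ y : N, r • y = f x := by
    obtain ⟨y, -, hy⟩ := (Submodule.mem_smul_pointwise_iff_exists _ _ _).mp (hf ⟨x, rfl⟩)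
    exact ⟨y, hy⟩
  choose u hu using hdiv
  refine ⟨{ toFun := u, map_add' := ?_, map_smul' := ?_ }, LinearMap.ext hu⟩
  · intro x y
    exact hr (by simp only [hu, smul_add, map_add])
  · intro a x
    exact hr (by simp only [hu, smul_comm r a, map_smul, RingHom.id_apply])

theorem FactorsThroughProjective.of_mapQ_smul_top {A R M N : Type} [Ring A] [Monoid R]
    [AddCommGroup M] [Module A M] [AddCommGroup N] [Module A N]
    [DistribMulAction R M] [SMulCommClass R A M]
    [DistribMulAction R N] [SMulCommClass A R N] [SMulCommClass R A N] {r : R}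
    (hr : Function.Injective (r • · : N → N))
    (hann : ∀ u : M →ₗ[A] N, FactorsThroughProjective A (r • u)) {f : M →ₗ[A] N}
    {hle : (r • ⊤ : Submodule A M) ≤ (r • ⊤ : Submodule A N).comap f}
    (hf : FactorsThroughProjective A (Submodule.mapQ _ _ f hle)) :
    FactorsThroughProjective A f := by
  obtain ⟨c, hc, hcf⟩ := (hf.comp_right (r • ⊤ : Submodule A M).mkQ).exists_lift
    (r • ⊤ : Submodule A N).mkQ_surjective
  have hrange : LinearMap.range (f - c) ≤ r • (⊤ : Submodule A N) := by
    rw [← Submodule.ker_mkQ (r • ⊤ : Submodule A N), LinearMap.range_le_ker_iff,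
      LinearMap.comp_sub, hcf, Submodule.mapQ_mkQ, sub_self]
  obtain ⟨u, hu⟩ := LinearMap.exists_smul_eq_of_range_le hr hrange
  simpa [hu] using hc.add (hann u)

theorem stable_hom_reduction_injective_general
    (O : Type) [CommRing O] [IsDomain O]
    (π : O) (hπ : Irreducible π)
    (G : Type) [Group G]
    (M N : Type) [AddCommGroup M] [Module (MonoidAlgebra O G) M]
    [AddCommGroup N] [Module (MonoidAlgebra O G) N]
    [Module O M] [SMulCommClass O (MonoidAlgebra O G) M]
    [Module O N] [IsScalarTower O (MonoidAlgebra O G) N] [SMulCommClass O (MonoidAlgebra O G) N]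
    (hNfree : Module.Free O N)
    (b : ℕ)
    (hann : ∀ f : M →ₗ[MonoidAlgebra O G] N,
      FactorsThroughProjective (MonoidAlgebra O G) (π ^ b • f)) :
    ∀ (f : M →ₗ[MonoidAlgebra O G] N)
      (hle : (π ^ b • ⊤ : Submodule (MonoidAlgebra O G) M) ≤
        (π ^ b • ⊤ : Submodule (MonoidAlgebra O G) N).comap f),
      FactorsThroughProjective (MonoidAlgebra O G)
        (Submodule.mapQ (π ^ b • ⊤ : Submodule (MonoidAlgebra O G) M)
          (π ^ b • ⊤ : Submodule (MonoidAlgebra O G) N) f hle) →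
      FactorsThroughProjective (MonoidAlgebra O G) f := by
  intro f hle hf
  have hr : Function.Injective ((π ^ b : O) • · : N → N) :=
    smul_right_injective N (pow_ne_zero b hπ.ne_zero)
  exact FactorsThroughProjective.of_mapQ_smul_top hr hann hf

/-- Let `O` be a discrete valuation ring with uniformizer `π`, `G` a
finite group and `M`, `N` finitely generated `OG`-lattices.  If every stable
homomorphism `M → N` is annihilated by `π^b` (i.e. `π^b • f` factors through a
projective for every `f`), then the reduction map on stable Hom spaces induced by
`- ⊗ O/π^b O` is injective: a map `f : M → N` whose reduction mod `π^b` factors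
through a projective already factors through a projective. -/
theorem stable_hom_reduction_injective
    (O : Type) [CommRing O] [IsDomain O] [IsDiscreteValuationRing O]
    (π : O) (hπ : Irreducible π)
    (G : Type) [Group G] [Fintype G]
    (M N : Type) [AddCommGroup M] [Module (MonoidAlgebra O G) M]
    [AddCommGroup N] [Module (MonoidAlgebra O G) N]
    [Module O M] [IsScalarTower O (MonoidAlgebra O G) M] [SMulCommClass O (MonoidAlgebra O G) M]
    [Module O N] [IsScalarTower O (MonoidAlgebra O G) N] [SMulCommClass O (MonoidAlgebra O G) N]
    (hMfg : Module.Finite (MonoidAlgebra O G) M) (hMfree : Module.Free O M)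
    (hNfg : Module.Finite (MonoidAlgebra O G) N) (hNfree : Module.Free O N)
    (b : ℕ)
    (hann : ∀ f : M →ₗ[MonoidAlgebra O G] N,
      FactorsThroughProjective (MonoidAlgebra O G) (π ^ b • f)) :
    ∀ (f : M →ₗ[MonoidAlgebra O G] N)
      (hle : (π ^ b • ⊤ : Submodule (MonoidAlgebra O G) M) ≤
        (π ^ b • ⊤ : Submodule (MonoidAlgebra O G) N).comap f),
      FactorsThroughProjective (MonoidAlgebra O G)
        (Submodule.mapQ (π ^ b • ⊤ : Submodule (MonoidAlgebra O G) M)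
          (π ^ b • ⊤ : Submodule (MonoidAlgebra O G) N) f hle) →
      FactorsThroughProjective (MonoidAlgebra O G) f :=
  stable_hom_reduction_injective_general O π hπ G M N hNfree b hann
end

section
/- Let F : S → T be a full exact (triangulated) functor between triangulated categories such that FX ≠ 0 for every nonzero object X of S. Then F is faithful. -/
/-!
If `F α = 0` for `α : X ⟶ Y`, complete `α` to a distinguished triangle `X ⟶ Y ⟶ Z ⟶ X⟦1⟧`.
Its image under `F` has vanishing first map, so `F Y ⟶ F Z` is a split monomorphism. Fullness
lifts the retraction to `r : Z ⟶ Y`, and `F` sends `Y ⟶ Z ⟶ Y` to the identity. A triangulated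
functor reflecting zero objects reflects isomorphisms (look at the cone), so `Y ⟶ Z` is a
monomorphism, which in a distinguished triangle forces `α = 0`.
-/

open CategoryTheory CategoryTheory.Limits

namespace CategoryTheory.Functor

lemma faithful_of_map_eq_zero {C D : Type*} [Category C] [Category D] [Preadditive C]
    [Preadditive D] (F : C ⥤ D) [F.Additive]
    (hF : ∀ {X Y : C} (f : X ⟶ Y), F.map f = 0 → f = 0) : F.Faithful :=
  ⟨fun {_ _ f g} h => sub_eq_zero.1 (hF _ (by rw [F.map_sub, h, sub_self]))⟩

lemma isSplitMono_of_isSplitMono_map {C D : Type*} [Category C] [Category D] (F : C ⥤ D)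
    [F.Full] [F.ReflectsIsomorphisms] {X Y : C} (f : X ⟶ Y) [IsSplitMono (F.map f)] :
    IsSplitMono f := by
  obtain ⟨r, hr⟩ := F.map_surjective (retraction (F.map f))
  have : IsIso (F.map (f ≫ r)) := by
    rw [F.map_comp, hr, IsSplitMono.id]
    infer_instance
  have : IsIso (f ≫ r) := isIso_of_reflects_iso _ F
  exact ⟨⟨⟨r ≫ CategoryTheory.inv (f ≫ r), by rw [← Category.assoc, IsIso.hom_inv_id]⟩⟩⟩

section Triangulated

open Pretriangulated

variable {C D : Type*} [Category C] [Preadditive C] [HasZeroObject C] [HasShift C ℤ]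
  [∀ n : ℤ, (shiftFunctor C n).Additive] [Pretriangulated C]
  [Category D] [Preadditive D] [HasZeroObject D] [HasShift D ℤ]
  [∀ n : ℤ, (shiftFunctor D n).Additive] [Pretriangulated D]
  (F : C ⥤ D) [F.CommShift ℤ] [F.IsTriangulated]

lemma reflectsIsomorphisms_of_reflects_isZero (hF : ∀ X : C, IsZero (F.obj X) → IsZero X) :
    F.ReflectsIsomorphisms where
  reflects {X Y} f _ := by
    obtain ⟨Z, g, _, hT⟩ := distinguished_cocone_triangle f
    have hFZ : IsZero (F.obj Z) :=
      Triangle.isZero₃_of_isIso₁ _ (F.map_distinguished _ hT) ‹IsIso (F.map f)›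
    exact (Triangle.isZero₃_iff_isIso₁ _ hT).1 (hF Z hFZ)

lemma eq_zero_of_map_eq_zero [F.Full] [F.ReflectsIsomorphisms] {X Y : C} (f : X ⟶ Y)
    (hf : F.map f = 0) : f = 0 := by
  obtain ⟨Z, g, _, hT⟩ := distinguished_cocone_triangle f
  have : Mono (F.map g) := Triangle.mono₂ _ (F.map_distinguished _ hT) hf
  have : IsSplitMono (F.map g) := isSplitMono_of_mono _
  have : IsSplitMono g := F.isSplitMono_of_isSplitMono_map g
  exact Triangle.mor₁_eq_zero_of_mono₂ _ hT (inferInstanceAs (Mono g))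

end Triangulated

end CategoryTheory.Functor

/-- A full exact (triangulated) functor between triangulated
(pretriangulated) categories which sends every nonzero object to a nonzero object
is faithful. -/
theorem full_exact_functor_reflecting_zero_is_faithful
    {S : Type*} [Category S] [Preadditive S] [HasZeroObject S] [HasShift S ℤ]
    [∀ n : ℤ, (CategoryTheory.shiftFunctor S n).Additive] [Pretriangulated S]
    {T : Type*} [Category T] [Preadditive T] [HasZeroObject T] [HasShift T ℤ]
    [∀ n : ℤ, (CategoryTheory.shiftFunctor T n).Additive] [Pretriangulated T]
    (F : S ⥤ T) [F.Additive] [F.CommShift ℤ] [F.IsTriangulated] [F.Full]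
    (hF : ∀ X : S, ¬ IsZero X → ¬ IsZero (F.obj X)) :
    F.Faithful := by
  have := F.reflectsIsomorphisms_of_reflects_isZero fun X => not_imp_not.1 (hF X)
  exact F.faithful_of_map_eq_zero F.eq_zero_of_map_eq_zero
end
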